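/- arXiv:2412.08617 — 3 statements merged into one kernel-verified Lean document; each statement's English description precedes it below -/
import Mathlib

section
/- Let G be a primitive L-loop completion with L > 1. Then for every decomposition δ of G (which, since G is a vacuum graph, consists of closed circuits only), the dual graph G*_δ is connected and has no vertices of valence 1 or 2, i.e., its minimum vertex degree is at least 3. -/
/-- A finite multigraph presented by half-edges: `vtx h` is the vertex at which the
half-edge `h` is attached, and `edg` is an involution pairing the two half-edges of
each internal edge; its fixed points are the external half-edges. -/
structure HGraph where
  V : Type
  H : Type
  fintypeV : Fintype V
  fintypeH : Fintype H
  decEqV : DecidableEq V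
  decEqH : DecidableEq H
  vtx : H → V
  edg : H → H
  edg_invol : ∀ h, edg (edg h) = h

attribute [instance] HGraph.fintypeV HGraph.fintypeH HGraph.decEqV HGraph.decEqH

namespace HGraph

variable (G : HGraph)

/-- A half-edge is external if the edge involution fixes it. -/
def IsExternal (h : G.H) : Prop := G.edg h = h

instance : DecidablePred G.IsExternal := fun h => inferInstanceAs (Decidable (G.edg h = h))

/-- The valence of a vertex: the number of half-edges incident to it. -/
def valence (v : G.V) : ℕ := Fintype.card {h : G.H // G.vtx h = v}

/-- The number of external half-edges. -/
def extCard : ℕ := Fintype.card {h : G.H // G.IsExternal h}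

/-- A vacuum graph has no external half-edges. -/
def IsVacuum : Prop := ∀ h : G.H, ¬ G.IsExternal h

/-- A decomposition of a graph: at every vertex, a partition of the incident
half-edges into pairs (encoded as a fixed-point-free involution fixing each vertex). -/
def Decomp : Type :=
  {p : G.H → G.H //
    (∀ h, p (p h) = h) ∧ (∀ h, p h ≠ h) ∧ ∀ h, G.vtx (p h) = G.vtx h}

instance : Fintype G.Decomp :=
  inferInstanceAs (Fintype {p : G.H → G.H //
    (∀ h, p (p h) = h) ∧ (∀ h, p h ≠ h) ∧ ∀ h, G.vtx (p h) = G.vtx h})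

/-- Two half-edges are one step apart (relative to a decomposition `d`) if they are
joined by an edge or paired at a vertex by `d`. -/
def dstep (d : G.Decomp) (h h' : G.H) : Prop := G.edg h = h' ∨ d.1 h = h'

/-- The circuits and paths of a decomposition are the equivalence classes of the
relation generated by `dstep`. -/
def dsetoid (d : G.Decomp) : Setoid G.H :=
  ⟨Relation.EqvGen (G.dstep d), Relation.EqvGen.is_equivalence _⟩

/-- The type of circuits/paths of a decomposition. -/
def Circuits (d : G.Decomp) : Type := Quotient (G.dsetoid d)

def circuitOf (d : G.Decomp) (h : G.H) : G.Circuits d := Quotient.mk (G.dsetoid d) h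

/-- A circuit is closed if it contains no external half-edge (otherwise it is an
open path ending at external half-edges). -/
def IsClosed (d : G.Decomp) (c : G.Circuits d) : Prop :=
  ∀ h : G.H, G.circuitOf d h = c → ¬ G.IsExternal h

/-- The number of closed circuits of a decomposition. -/
noncomputable def ncircuits (d : G.Decomp) : ℕ :=
  Nat.card {c : G.Circuits d // G.IsClosed d c}

/-- The circuit partition polynomial `J(G,N)`: the sum over all decompositions of
`N` raised to the number of closed circuits. -/
noncomputable def J : Polynomial ℤ :=
  ∑ d : G.Decomp, (Polynomial.X : Polynomial ℤ) ^ G.ncircuits d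

/-- The O(N) symmetry factor `T(G,N) = J(G,N)/J(G,1)`. -/
noncomputable def T : Polynomial ℚ :=
  Polynomial.C (((G.J.eval 1 : ℤ) : ℚ))⁻¹ * G.J.map (Int.castRingHom ℚ)

/-- Two vertices are adjacent if some edge connects them. -/
def adj (v w : G.V) : Prop := ∃ h : G.H, G.vtx h = v ∧ G.vtx (G.edg h) = w

/-- The graph is connected. -/
def Connected : Prop := ∀ v w : G.V, Relation.ReflTransGen G.adj v w

/-- An `L`-loop completion: a connected 4-regular vacuum graph with `L+2` vertices. -/
def IsCompletion (L : ℕ) : Prop :=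
  G.IsVacuum ∧ G.Connected ∧ (∀ v, G.valence v = 4) ∧ Fintype.card G.V = L + 2

/-- The number of edges crossing from `S` to its complement. -/
def cutSize (S : Finset G.V) : ℕ :=
  (Finset.univ.filter fun h : G.H => G.vtx h ∈ S ∧ G.vtx (G.edg h) ∉ S).card

/-- The induced subgraph on `S` contains a cycle: there is a nonempty set of
internal half-edges inside `S`, closed under the edge involution, in which every
incident vertex meets at least two of these half-edges. -/
def HasCycleIn (S : Set G.V) : Prop :=
  ∃ E : Finset G.H, E.Nonempty ∧
    (∀ h ∈ E, G.vtx h ∈ S ∧ ¬ G.IsExternal h ∧ G.edg h ∈ E) ∧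
    ∀ h ∈ E, 2 ≤ (E.filter fun h' => G.vtx h' = G.vtx h).card

/-- Cyclic 6-edge-connectivity: every edge cut separating two subgraphs which each
contain a cycle has at least 6 edges. -/
def CyclicallySixEdgeConnected : Prop :=
  ∀ S : Finset G.V, G.HasCycleIn ↑S → G.HasCycleIn ↑(Sᶜ) → 6 ≤ G.cutSize S

/-- A primitive `L`-loop completion. -/
def IsPrimitiveCompletion (L : ℕ) : Prop :=
  G.IsCompletion L ∧ G.CyclicallySixEdgeConnected

end HGraph

/-- Isomorphism of half-edge multigraphs. -/
structure HGraph.Iso (G₁ G₂ : HGraph) where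
  eV : G₁.V ≃ G₂.V
  eH : G₁.H ≃ G₂.H
  vtx_eq : ∀ h, G₂.vtx (eH h) = eV (G₁.vtx h)
  edg_eq : ∀ h, G₂.edg (eH h) = eH (G₁.edg h)

/-- Two graphs are isomorphic. -/
def HGraph.IsIsomorphic (G₁ G₂ : HGraph) : Prop := Nonempty (HGraph.Iso G₁ G₂)
namespace HGraph

variable (G : HGraph)

/-- The decompletion of a graph at a vertex `v`: delete `v` together with its
half-edges; half-edges formerly joined to a half-edge at `v` become external. -/
def decompletion (v : G.V) : HGraph where
  V := {w : G.V // w ≠ v}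
  H := {h : G.H // G.vtx h ≠ v}
  fintypeV := inferInstance
  fintypeH := inferInstance
  decEqV := inferInstance
  decEqH := inferInstance
  vtx h := ⟨G.vtx h.1, h.2⟩
  edg h := if hc : G.vtx (G.edg h.1) = v then h else ⟨G.edg h.1, hc⟩
  edg_invol := by
    rintro ⟨h, hh⟩
    dsimp only
    by_cases hc : G.vtx (G.edg h) = v
    · simp [hc]
    · rw [dif_neg hc]
      rw [dif_neg (show ¬ G.vtx (G.edg (G.edg h)) = v by rw [G.edg_invol]; exact hh)]
      simp [G.edg_invol]

/-- The completion of a graph `g`: all external half-edges of `g` are joined to a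
single new vertex. -/
def completion : HGraph where
  V := Option G.V
  H := G.H ⊕ {h : G.H // G.IsExternal h}
  fintypeV := inferInstance
  fintypeH := inferInstance
  decEqV := inferInstance
  decEqH := inferInstance
  vtx := Sum.elim (fun h => some (G.vtx h)) fun _ => none
  edg := fun x =>
    match x with
    | .inl h => if hx : G.IsExternal h then .inr ⟨h, hx⟩ else .inl (G.edg h)
    | .inr y => .inl y.1
  edg_invol := by
    rintro (h | y)
    · by_cases hx : G.IsExternal h
      · simp [hx]
      · have hx' : ¬ G.IsExternal (G.edg h) := by
          intro hcon
          unfold IsExternal at hcon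
          rw [G.edg_invol] at hcon
          exact hx hcon.symm
        simp [hx, hx', G.edg_invol]
    · simp [y.2]

end HGraph
namespace HGraph

/-- Gluing two graphs along a bijection `σ` between their external half-edges. -/
def glue (g₁ g₂ : HGraph)
    (σ : {h : g₁.H // g₁.IsExternal h} ≃ {h : g₂.H // g₂.IsExternal h}) : HGraph where
  V := g₁.V ⊕ g₂.V
  H := g₁.H ⊕ g₂.H
  fintypeV := inferInstance
  fintypeH := inferInstance
  decEqV := inferInstance
  decEqH := inferInstance
  vtx := Sum.elim (fun h => .inl (g₁.vtx h)) fun h => .inr (g₂.vtx h)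
  edg := Sum.elim
    (fun h => if hx : g₁.IsExternal h then .inr (σ ⟨h, hx⟩).1 else .inl (g₁.edg h))
    (fun h => if hx : g₂.IsExternal h then .inl (σ.symm ⟨h, hx⟩).1 else .inr (g₂.edg h))
  edg_invol := by
    rintro (h | h)
    · rw [Sum.elim_inl]
      by_cases hx : g₁.IsExternal h
      · rw [dif_pos hx, Sum.elim_inr, dif_pos (σ ⟨h, hx⟩).2]
        simp
      · have hx' : ¬ g₁.IsExternal (g₁.edg h) := by
          intro hcon; unfold IsExternal at hcon
          rw [g₁.edg_invol] at hcon; exact hx hcon.symm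
        rw [dif_neg hx, Sum.elim_inl, dif_neg hx', g₁.edg_invol]
    · rw [Sum.elim_inr]
      by_cases hx : g₂.IsExternal h
      · rw [dif_pos hx, Sum.elim_inl, dif_pos (σ.symm ⟨h, hx⟩).2]
        simp
      · have hx' : ¬ g₂.IsExternal (g₂.edg h) := by
          intro hcon; unfold IsExternal at hcon
          rw [g₂.edg_invol] at hcon; exact hx hcon.symm
        rw [dif_neg hx, Sum.elim_inr, dif_neg hx', g₂.edg_invol]

/-- Insertion of the graph `g₁` into the graph `g₂` in place of the vertex `v₂`:
delete `v₂` and glue the external half-edges of `g₁` to the severed half-edges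
according to the bijection `σ`. -/
def insertAt (g₁ g₂ : HGraph) (v₂ : g₂.V)
    (σ : {h : g₁.H // g₁.IsExternal h} ≃ {h : g₂.H // g₂.vtx h = v₂}) : HGraph where
  V := g₁.V ⊕ {w : g₂.V // w ≠ v₂}
  H := g₁.H ⊕ {h : g₂.H // g₂.vtx h ≠ v₂}
  fintypeV := inferInstance
  fintypeH := inferInstance
  decEqV := inferInstance
  decEqH := inferInstance
  vtx := Sum.elim (fun h => .inl (g₁.vtx h)) fun h => .inr ⟨g₂.vtx h.1, h.2⟩
  edg := Sum.elim
    (fun h =>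
      if hx : g₁.IsExternal h then
        if hc : g₂.vtx (g₂.edg (σ ⟨h, hx⟩).1) = v₂ then
          .inl (σ.symm ⟨g₂.edg (σ ⟨h, hx⟩).1, hc⟩).1
        else .inr ⟨g₂.edg (σ ⟨h, hx⟩).1, hc⟩
      else .inl (g₁.edg h))
    (fun h =>
      if hc : g₂.vtx (g₂.edg h.1) = v₂ then .inl (σ.symm ⟨g₂.edg h.1, hc⟩).1
      else .inr ⟨g₂.edg h.1, hc⟩)
  edg_invol := by
    rintro (h | h)
    · rw [Sum.elim_inl]
      by_cases hx : g₁.IsExternal h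
      · rw [dif_pos hx]
        by_cases hc : g₂.vtx (g₂.edg (σ ⟨h, hx⟩).1) = v₂
        · rw [dif_pos hc, Sum.elim_inl, dif_pos (σ.symm ⟨g₂.edg (σ ⟨h, hx⟩).1, hc⟩).2]
          simp only [Subtype.coe_eta, Equiv.apply_symm_apply]
          rw [dif_pos (show g₂.vtx (g₂.edg (g₂.edg (σ ⟨h, hx⟩).1)) = v₂ by
            rw [g₂.edg_invol]; exact (σ ⟨h, hx⟩).2)]
          simp only [g₂.edg_invol, Subtype.coe_eta, Equiv.symm_apply_apply]
        · rw [dif_neg hc, Sum.elim_inr]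
          simp only
          rw [dif_pos (show g₂.vtx (g₂.edg (g₂.edg (σ ⟨h, hx⟩).1)) = v₂ by
            rw [g₂.edg_invol]; exact (σ ⟨h, hx⟩).2)]
          simp only [g₂.edg_invol, Subtype.coe_eta, Equiv.symm_apply_apply]
      · have hx' : ¬ g₁.IsExternal (g₁.edg h) := by
          intro hcon; unfold IsExternal at hcon
          rw [g₁.edg_invol] at hcon; exact hx hcon.symm
        rw [dif_neg hx, Sum.elim_inl, dif_neg hx', g₁.edg_invol]
    · rw [Sum.elim_inr]
      by_cases hc : g₂.vtx (g₂.edg h.1) = v₂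
      · rw [dif_pos hc, Sum.elim_inl, dif_pos (σ.symm ⟨g₂.edg h.1, hc⟩).2]
        simp only [Subtype.coe_eta, Equiv.apply_symm_apply]
        rw [dif_neg (show ¬ g₂.vtx (g₂.edg (g₂.edg h.1)) = v₂ by
          rw [g₂.edg_invol]; exact h.2)]
        simp only [g₂.edg_invol, Subtype.coe_eta, Equiv.symm_apply_apply]
      · rw [dif_neg hc, Sum.elim_inr]
        simp only
        rw [dif_neg (show ¬ g₂.vtx (g₂.edg (g₂.edg h.1)) = v₂ by
          rw [g₂.edg_invol]; exact h.2)]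
        simp only [g₂.edg_invol, Subtype.coe_eta]

end HGraph
namespace HGraph

variable (G : HGraph)

/-- Insertion of a propagator-type graph `p` into the internal edge `{h₀, edg h₀}`
of the graph `g`: cut the edge and glue the two external half-edges of `p` to the
two severed half-edges according to the bijection `σ`. -/
def insertEdge (p g : HGraph) (h₀ : g.H)
    (σ : {y : p.H // p.IsExternal y} ≃ {x : g.H // x = h₀ ∨ x = g.edg h₀}) : HGraph where
  V := g.V ⊕ p.V
  H := g.H ⊕ p.H
  fintypeV := inferInstance
  fintypeH := inferInstance
  decEqV := inferInstance
  decEqH := inferInstance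
  vtx := Sum.elim (fun h => .inl (g.vtx h)) fun h => .inr (p.vtx h)
  edg := Sum.elim
    (fun x => if hx : x = h₀ ∨ x = g.edg h₀ then .inr (σ.symm ⟨x, hx⟩).1
      else .inl (g.edg x))
    (fun y => if hy : p.IsExternal y then .inl (σ ⟨y, hy⟩).1 else .inr (p.edg y))
  edg_invol := by
    rintro (x | y)
    · rw [Sum.elim_inl]
      by_cases hx : x = h₀ ∨ x = g.edg h₀
      · rw [dif_pos hx, Sum.elim_inr, dif_pos (σ.symm ⟨x, hx⟩).2]
        simp only [Subtype.coe_eta, Equiv.apply_symm_apply]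
      · have hx' : ¬ (g.edg x = h₀ ∨ g.edg x = g.edg h₀) := by
          rintro (hh | hh)
          · exact hx (Or.inr (by rw [← hh, g.edg_invol]))
          · exact hx (Or.inl (by
              have := congrArg g.edg hh
              rwa [g.edg_invol, g.edg_invol] at this))
        rw [dif_neg hx, Sum.elim_inl, dif_neg hx', g.edg_invol]
    · rw [Sum.elim_inr]
      by_cases hy : p.IsExternal y
      · rw [dif_pos hy, Sum.elim_inl, dif_pos (σ ⟨y, hy⟩).2]
        simp only [Subtype.coe_eta, Equiv.symm_apply_apply]
      · have hy' : ¬ p.IsExternal (p.edg y) := by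
          intro hcon; unfold IsExternal at hcon
          rw [p.edg_invol] at hcon; exact hy hcon.symm
        rw [dif_neg hy, Sum.elim_inr, dif_neg hy', p.edg_invol]

/-- The setoid on half-edges identifying the two half-edges of each edge;
its classes are the edges of the graph. -/
def edgeSetoid : Setoid G.H :=
  ⟨fun h h' => h' = h ∨ h' = G.edg h, by
    constructor
    · intro h; exact Or.inl rfl
    · intro a b hab
      rcases hab with h | h
      · exact Or.inl h.symm
      · exact Or.inr (by rw [h, G.edg_invol])
    · intro a b c hab hbc
      rcases hab with h | h <;> rcases hbc with h' | h'
      · exact Or.inl (h'.trans h)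
      · exact Or.inr (by rw [h', h])
      · exact Or.inr (h'.trans h)
      · exact Or.inl (by rw [h', h, G.edg_invol])⟩

instance edgeSetoidDecidable : DecidableRel (G.edgeSetoid).r := fun h h' =>
  inferInstanceAs (Decidable (h' = h ∨ h' = G.edg h))

/-- The type of edges of a graph. -/
def Edges : Type := Quotient G.edgeSetoid

instance : DecidableEq G.Edges :=
  @Quotient.decidableEq _ G.edgeSetoid G.edgeSetoidDecidable

instance : Fintype G.Edges :=
  @Quotient.fintype _ _ G.edgeSetoid G.edgeSetoidDecidable

def edgeOf (h : G.H) : G.Edges := Quotient.mk G.edgeSetoid h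

/-- The line graph: its vertices are the edges of `G`, and each unordered pair of
distinct half-edges sitting at a common vertex of `G` gives an edge between the
corresponding edges of `G`. -/
def lineGraph : HGraph where
  V := G.Edges
  H := {q : G.H × G.H // G.vtx q.1 = G.vtx q.2 ∧ q.1 ≠ q.2}
  fintypeV := inferInstance
  fintypeH := inferInstance
  decEqV := inferInstance
  decEqH := inferInstance
  vtx q := G.edgeOf q.1.1
  edg q := ⟨(q.1.2, q.1.1), q.2.1.symm, Ne.symm q.2.2⟩
  edg_invol := by rintro ⟨⟨a, b⟩, hq⟩; rfl

/-- Two half-edges spanning a pair of distinct parallel edges (a double edge). -/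
def ParallelPair (h₁ h₂ : G.H) : Prop :=
  G.vtx h₁ = G.vtx h₂ ∧ G.vtx (G.edg h₁) = G.vtx (G.edg h₂) ∧ h₂ ≠ h₁ ∧ h₂ ≠ G.edg h₁

/-- A simple graph: no self-loops and no parallel edges. -/
def Simple : Prop :=
  (∀ h, G.vtx (G.edg h) ≠ G.vtx h) ∧ ∀ h₁ h₂, ¬ G.ParallelPair h₁ h₂

/-- 3-edge-connectivity: connected, and every edge cut between a nonempty vertex
set and its nonempty complement has at least 3 edges. -/
def ThreeEdgeConnected : Prop :=
  G.Connected ∧ ∀ S : Finset G.V, S.Nonempty → (Sᶜ : Finset G.V).Nonempty → 3 ≤ G.cutSize S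

end HGraph

/-- The octahedron graph `K_{2,2,2}`: six vertices, two in each of three groups,
with an edge between any two vertices of different groups. -/
def octahedron : HGraph where
  V := Fin 3 × Fin 2
  H := {q : (Fin 3 × Fin 2) × (Fin 3 × Fin 2) // q.1.1 ≠ q.2.1}
  fintypeV := inferInstance
  fintypeH := inferInstance
  decEqV := inferInstance
  decEqH := inferInstance
  vtx q := q.1.1
  edg q := ⟨(q.1.2, q.1.1), Ne.symm q.2⟩
  edg_invol := by rintro ⟨⟨a, b⟩, hq⟩; rfl

/-- The fish graph: two 4-valent vertices joined by a double edge, with two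
external half-edges at each vertex. -/
def fishGraph : HGraph where
  V := Bool
  H := Bool × Fin 4
  fintypeV := inferInstance
  fintypeH := inferInstance
  decEqV := inferInstance
  decEqH := inferInstance
  vtx q := q.1
  edg q := if (q.2 : ℕ) ≤ 1 then (!q.1, q.2) else q
  edg_invol := by
    rintro ⟨b, j⟩
    by_cases hj : (j : ℕ) ≤ 1 <;> simp [hj]


namespace HGraph

variable (G : HGraph)

lemma circuitOf_edg (d : G.Decomp) (h : G.H) :
    G.circuitOf d (G.edg h) = G.circuitOf d h := by
  refine (Quotient.sound ?_).symm
  show Relation.EqvGen (G.dstep d) h (G.edg h)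
  exact Relation.EqvGen.rel _ _ (Or.inl rfl)

lemma circuitOf_pair (d : G.Decomp) (h : G.H) :
    G.circuitOf d (d.1 h) = G.circuitOf d h := by
  refine (Quotient.sound ?_).symm
  show Relation.EqvGen (G.dstep d) h (d.1 h)
  exact Relation.EqvGen.rel _ _ (Or.inr rfl)

/-- A nonempty, involution-closed half-edge set with twice as many half-edges as
incident vertices contains a cycle (a "2-core" pruning argument). -/
lemma hasCycleIn_of_dense (S : Set G.V) :
    ∀ n (E : Finset G.H), E.card ≤ n → E.Nonempty →
      (∀ h ∈ E, G.vtx h ∈ S ∧ ¬ G.IsExternal h ∧ G.edg h ∈ E) →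
      2 * (E.image G.vtx).card ≤ E.card → G.HasCycleIn S := by
  intro n
  induction n with
  | zero =>
    intro E hcard hne _ _
    have := Finset.card_pos.mpr hne; omega
  | succ n ih =>
    intro E hcard hne hcl hdense
    by_cases hgood : ∀ h ∈ E, 2 ≤ (E.filter fun h' => G.vtx h' = G.vtx h).card
    · exact ⟨E, hne, hcl, hgood⟩
    push_neg at hgood
    obtain ⟨h, hh, hlt⟩ := hgood
    have hmem : h ∈ E.filter fun h' => G.vtx h' = G.vtx h :=
      Finset.mem_filter.mpr ⟨hh, rfl⟩
    have hfilt : ∀ x ∈ E, G.vtx x = G.vtx h → x = h := by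
      intro x hx hvx
      by_contra hxh
      have h2 : 2 ≤ (E.filter fun h' => G.vtx h' = G.vtx h).card := by
        have := Finset.one_lt_card.mpr
          ⟨x, Finset.mem_filter.mpr ⟨hx, hvx⟩, h, hmem, hxh⟩
        omega
      omega
    have hhe : G.edg h ≠ h := (hcl h hh).2.1
    have heh : G.edg h ∈ E := (hcl h hh).2.2
    set E' := (E.erase h).erase (G.edg h) with hE'
    have hE'mem : ∀ x, x ∈ E' ↔ x ∈ E ∧ x ≠ h ∧ x ≠ G.edg h := by
      intro x
      simp only [hE', Finset.mem_erase]
      tauto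
    have hcard1 : (E.erase h).card = E.card - 1 := Finset.card_erase_of_mem hh
    have hehe : G.edg h ∈ E.erase h := Finset.mem_erase.mpr ⟨hhe, heh⟩
    have hcard2 : E'.card = E.card - 2 := by
      rw [hE', Finset.card_erase_of_mem hehe, hcard1]
      omega
    have hElb : 1 < E.card := Finset.one_lt_card.mpr ⟨h, hh, G.edg h, heh, Ne.symm hhe⟩
    have hvnotin : ∀ x ∈ E', G.vtx x ≠ G.vtx h := by
      intro x hx hvx
      have hx' := (hE'mem x).mp hx
      exact hx'.2.1 (hfilt x hx'.1 hvx)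
    have himsub : E'.image G.vtx ⊆ (E.image G.vtx).erase (G.vtx h) := by
      intro v hv
      obtain ⟨x, hx, rfl⟩ := Finset.mem_image.mp hv
      exact Finset.mem_erase.mpr ⟨hvnotin x hx,
        Finset.mem_image_of_mem _ ((hE'mem x).mp hx).1⟩
    have himcard : (E'.image G.vtx).card ≤ (E.image G.vtx).card - 1 := by
      have := Finset.card_le_card himsub
      rwa [Finset.card_erase_of_mem (Finset.mem_image_of_mem _ hh)] at this
    have hcl' : ∀ x ∈ E', G.vtx x ∈ S ∧ ¬ G.IsExternal x ∧ G.edg x ∈ E' := by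
      intro x hx
      obtain ⟨hxE, hxh, hxeh⟩ := (hE'mem x).mp hx
      obtain ⟨h1, h2, h3⟩ := hcl x hxE
      refine ⟨h1, h2, (hE'mem _).mpr ⟨h3, ?_, ?_⟩⟩
      · intro hc
        exact hxeh (by rw [← hc, G.edg_invol])
      · intro hc
        have := congrArg G.edg hc
        rw [G.edg_invol, G.edg_invol] at this
        exact hxh this
    have hne' : E'.Nonempty := by
      rcases Finset.eq_empty_or_nonempty E' with hemp | hne'
      · exfalso
        have hcE : E.card = 2 := by
          have := hemp ▸ hcard2
          simp only [Finset.card_empty] at this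
          omega
        have him1 : (E.image G.vtx).card ≤ 1 := by omega
        have hv1 : G.vtx h ∈ E.image G.vtx := Finset.mem_image_of_mem _ hh
        have hv2 : G.vtx (G.edg h) ∈ E.image G.vtx := Finset.mem_image_of_mem _ heh
        have hveq : G.vtx (G.edg h) = G.vtx h := by
          by_contra hc
          have := Finset.one_lt_card.mpr ⟨_, hv2, _, hv1, hc⟩
          omega
        exact hhe (hfilt _ heh hveq)
      · exact hne'
    have himpos : 1 ≤ (E.image G.vtx).card :=
      Finset.card_pos.mpr ⟨G.vtx h, Finset.mem_image_of_mem _ hh⟩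
    exact ih E' (by omega) hne' hcl' (by omega)

/-- In a 4-regular graph the number of half-edges at a vertex set `T` is `4 |T|`. -/
lemma card_filter_vtx_mem (h4 : ∀ v, G.valence v = 4) (T : Finset G.V) :
    (Finset.univ.filter fun h : G.H => G.vtx h ∈ T).card = 4 * T.card := by
  classical
  rw [Finset.card_eq_sum_card_fiberwise
    (f := G.vtx) (s := Finset.univ.filter fun h : G.H => G.vtx h ∈ T) (t := T) (fun h hh => (Finset.mem_filter.mp hh).2)]
  have : ∀ v ∈ T,
      ((Finset.univ.filter fun h : G.H => G.vtx h ∈ T).filter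
        fun h => G.vtx h = v).card = 4 := by
    intro v hv
    have heq : ((Finset.univ.filter fun h : G.H => G.vtx h ∈ T).filter
        fun h => G.vtx h = v) = Finset.univ.filter fun h : G.H => G.vtx h = v := by
      ext x
      simp only [Finset.mem_filter, Finset.mem_univ, true_and]
      constructor
      · rintro ⟨_, hx⟩; exact hx
      · intro hx; exact ⟨hx ▸ hv, hx⟩
    rw [heq]
    have := h4 v
    rwa [valence, Fintype.card_subtype] at this
  rw [Finset.sum_congr rfl this, Finset.sum_const, smul_eq_mul, mul_comm]

lemma cutSize_compl (S : Finset G.V) : G.cutSize Sᶜ = G.cutSize S := by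
  classical
  unfold cutSize
  apply Finset.card_bij' (fun h _ => G.edg h) (fun h _ => G.edg h)
  · intro a ha
    simp only [Finset.mem_filter, Finset.mem_univ, true_and, Finset.mem_compl,
      not_not] at ha ⊢
    rw [G.edg_invol]
    exact ⟨ha.2, ha.1⟩
  · intro a ha
    simp only [Finset.mem_filter, Finset.mem_univ, true_and, Finset.mem_compl,
      not_not] at ha ⊢
    rw [G.edg_invol]
    exact ⟨ha.2, ha.1⟩
  · intro a _; exact G.edg_invol a
  · intro a _; exact G.edg_invol a

end HGraph

/-- Let `G` be a primitive `L`-loop completion with `L > 1` and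
let `δ` be a decomposition of `G` (since `G` is a vacuum graph, it consists of
closed circuits only).  Then the dual graph `G*_δ` — one vertex per circuit of `δ`
and, for each vertex of `G`, one edge joining the (possibly equal) circuits
through it — is connected and has minimum vertex degree at least `3`.
Connectivity of the dual is expressed as: any two circuits are joined by a chain
of circuits consecutively sharing a vertex of `G`.  The degree of a dual vertex
(a circuit) is the number of vertex-passages of the circuit, i.e. half the number
of half-edges it contains; so minimum degree `≥ 3` says every circuit contains at
least `6` half-edges. -/
theorem dual_connected_min_degree_three (L : ℕ) (hL : 1 < L) (G : HGraph)
    (hG : G.IsPrimitiveCompletion L) (δ : G.Decomp) :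
    (∀ c c' : G.Circuits δ,
      Relation.ReflTransGen
        (fun a b => ∃ h h' : G.H,
          G.circuitOf δ h = a ∧ G.circuitOf δ h' = b ∧ G.vtx h = G.vtx h') c c') ∧
    ∀ c : G.Circuits δ, 6 ≤ Nat.card {h : G.H // G.circuitOf δ h = c} := by
  classical
  obtain ⟨⟨hvac, hconn, hval, hV⟩, h6⟩ := hG
  constructor
  · -- connectivity of the dual
    have key : ∀ (h : G.H) (w : G.V), Relation.ReflTransGen G.adj (G.vtx h) w →
        ∀ h' : G.H, G.vtx h' = w →
        Relation.ReflTransGen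
          (fun a b => ∃ x x' : G.H,
            G.circuitOf δ x = a ∧ G.circuitOf δ x' = b ∧ G.vtx x = G.vtx x')
          (G.circuitOf δ h) (G.circuitOf δ h') := by
      intro h w ht
      induction ht with
      | refl =>
        intro h' hv
        exact Relation.ReflTransGen.single ⟨h, h', rfl, rfl, hv.symm⟩
      | tail hab hbc ih =>
        obtain ⟨k, hk1, hk2⟩ := hbc
        intro h' hv
        refine (ih k hk1).trans (Relation.ReflTransGen.single ?_)
        exact ⟨G.edg k, h', G.circuitOf_edg δ k, rfl, hk2.trans hv.symm⟩
    intro c c'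
    refine Quotient.inductionOn₂ c c' (fun a b => ?_)
    exact key a (G.vtx b) (hconn (G.vtx a) (G.vtx b)) b rfl
  · -- minimum degree at least 3
    intro c
    by_contra hlt
    push_neg at hlt
    obtain ⟨h₀, hh₀⟩ := Quotient.exists_rep c
    set E : Finset G.H := Finset.univ.filter (fun h => G.circuitOf δ h = c) with hEdef
    have hmemE : ∀ h, h ∈ E ↔ G.circuitOf δ h = c := by
      intro h; simp [hEdef]
    have hNat : Nat.card {h : G.H // G.circuitOf δ h = c} = E.card := by
      rw [Nat.card_eq_fintype_card, Fintype.card_subtype]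
    rw [hNat] at hlt
    have hh₀E : h₀ ∈ E := (hmemE h₀).mpr hh₀
    have hEedg : ∀ h ∈ E, G.edg h ∈ E := by
      intro h hh
      exact (hmemE _).mpr ((G.circuitOf_edg δ h).trans ((hmemE h).mp hh))
    have hEpair : ∀ h ∈ E, δ.1 h ∈ E := by
      intro h hh
      exact (hmemE _).mpr ((G.circuitOf_pair δ h).trans ((hmemE h).mp hh))
    set S : Finset G.V := E.image G.vtx with hSdef
    -- each vertex of S carries at least two half-edges of E
    have hfib : ∀ h ∈ E, 2 ≤ (E.filter fun h' => G.vtx h' = G.vtx h).card := by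
      intro h hh
      refine Finset.one_lt_card.mpr ⟨δ.1 h, ?_, h, ?_, δ.2.2.1 h⟩
      · exact Finset.mem_filter.mpr ⟨hEpair h hh, δ.2.2.2 h⟩
      · exact Finset.mem_filter.mpr ⟨hh, rfl⟩
    have hSE : 2 * S.card ≤ E.card := by
      rw [hSdef, Finset.card_eq_sum_card_fiberwise
        (f := G.vtx) (t := E.image G.vtx) (fun h hh => Finset.mem_image_of_mem _ hh)]
      have : ∀ v ∈ E.image G.vtx, 2 ≤ (E.filter fun h => G.vtx h = v).card := by
        intro v hv
        obtain ⟨h, hh, rfl⟩ := Finset.mem_image.mp hv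
        exact hfib h hh
      calc 2 * (E.image G.vtx).card = ∑ _v ∈ E.image G.vtx, 2 := by
            rw [Finset.sum_const, smul_eq_mul, mul_comm]
        _ ≤ ∑ v ∈ E.image G.vtx, (E.filter fun h => G.vtx h = v).card :=
            Finset.sum_le_sum this
    have hSpos : 1 ≤ S.card :=
      Finset.card_pos.mpr ⟨G.vtx h₀, Finset.mem_image_of_mem _ hh₀E⟩
    -- the cut around S is small
    have hcutS : G.cutSize S + E.card ≤ 4 * S.card := by
      have hdisj : Disjoint
          (Finset.univ.filter fun h : G.H => G.vtx h ∈ S ∧ G.vtx (G.edg h) ∉ S) E := by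
        rw [Finset.disjoint_left]
        intro h hh hhE
        exact (Finset.mem_filter.mp hh).2.2
          (Finset.mem_image_of_mem _ (hEedg h hhE))
      have hsub : (Finset.univ.filter
            fun h : G.H => G.vtx h ∈ S ∧ G.vtx (G.edg h) ∉ S) ∪ E ⊆
          Finset.univ.filter fun h : G.H => G.vtx h ∈ S := by
        intro h hh
        rcases Finset.mem_union.mp hh with hh | hh
        · exact Finset.mem_filter.mpr ⟨Finset.mem_univ _, (Finset.mem_filter.mp hh).2.1⟩
        · exact Finset.mem_filter.mpr ⟨Finset.mem_univ _, Finset.mem_image_of_mem _ hh⟩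
      have := Finset.card_le_card hsub
      rw [Finset.card_union_of_disjoint hdisj, G.card_filter_vtx_mem hval S] at this
      exact this
    have hE2 : 2 ≤ E.card := by omega
    have hS2 : S.card ≤ 2 := by omega
    have hcut4 : G.cutSize S ≤ 4 := by omega
    -- the complement side
    have hSc : 2 ≤ (Sᶜ : Finset G.V).card := by
      rw [Finset.card_compl, hV]
      omega
    set Eo : Finset G.H := Finset.univ.filter
      (fun h => G.vtx h ∈ (Sᶜ : Finset G.V) ∧ G.vtx (G.edg h) ∈ (Sᶜ : Finset G.V))
      with hEodef
    have hEocard : Eo.card + G.cutSize Sᶜ = 4 * (Sᶜ : Finset G.V).card := by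
      have := Finset.card_filter_add_card_filter_not
        (s := Finset.univ.filter fun h : G.H => G.vtx h ∈ (Sᶜ : Finset G.V))
        (p := fun h => G.vtx (G.edg h) ∈ (Sᶜ : Finset G.V))
      rw [G.card_filter_vtx_mem hval Sᶜ] at this
      rw [← this]
      congr 1
      · rw [hEodef, Finset.filter_filter]
      · unfold HGraph.cutSize
        rw [Finset.filter_filter]
    have hEobig : 2 * (Sᶜ : Finset G.V).card ≤ Eo.card := by
      have := G.cutSize_compl S
      omega
    have hEone : Eo.Nonempty := by
      refine Finset.card_pos.mp ?_
      omega
    have hEocl : ∀ h ∈ Eo, G.vtx h ∈ ((Sᶜ : Finset G.V) : Set G.V) ∧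
        ¬ G.IsExternal h ∧ G.edg h ∈ Eo := by
      intro h hh
      obtain ⟨-, h1, h2⟩ := Finset.mem_filter.mp hh
      refine ⟨h1, hvac h, Finset.mem_filter.mpr ⟨Finset.mem_univ _, h2, ?_⟩⟩
      rw [G.edg_invol]
      exact h1
    have hEoim : 2 * (Eo.image G.vtx).card ≤ Eo.card := by
      have hsub : Eo.image G.vtx ⊆ Sᶜ := by
        intro v hv
        obtain ⟨h, hh, rfl⟩ := Finset.mem_image.mp hv
        exact (Finset.mem_filter.mp hh).2.1
      have := Finset.card_le_card hsub
      omega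
    have hcycOut : G.HasCycleIn ((Sᶜ : Finset G.V) : Set G.V) :=
      G.hasCycleIn_of_dense _ Eo.card Eo le_rfl hEone hEocl hEoim
    have hcycIn : G.HasCycleIn (S : Set G.V) := by
      refine ⟨E, ⟨h₀, hh₀E⟩, ?_, hfib⟩
      intro h hh
      exact ⟨Finset.mem_image_of_mem _ hh, hvac h, hEedg h hh⟩
    have := h6 S hcycIn hcycOut
    omega
end

section
/- Let G be a primitive L-loop completion with L > 1 and let g be any decompletion of G. Then the degree in N of the polynomial T(G,N) is at most (2L+4)/3, and the degree in N of the polynomial T(g,N) is at most (2L−2)/3. Equivalently, every decomposition of G has at most ⌊(2L+4)/3⌋ circuits. -/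
namespace HGraph

open Finset
open scoped Classical

lemma circuitOf_step (X : HGraph) (d : X.Decomp) {x y : X.H} (h : X.dstep d x y) :
    X.circuitOf d x = X.circuitOf d y :=
  Quotient.sound (Relation.EqvGen.rel x y h)

lemma circuitOf_edg_s12 (X : HGraph) (d : X.Decomp) (x : X.H) :
    X.circuitOf d (X.edg x) = X.circuitOf d x :=
  (X.circuitOf_step d (Or.inl rfl)).symm

lemma circuitOf_pair_s12 (X : HGraph) (d : X.Decomp) (x : X.H) :
    X.circuitOf d (d.1 x) = X.circuitOf d x :=
  (X.circuitOf_step d (Or.inr rfl)).symm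

lemma natDegree_T_le (X : HGraph) (n : ℕ) (h : ∀ d : X.Decomp, X.ncircuits d ≤ n) :
    X.T.natDegree ≤ n := by
  refine le_trans (Polynomial.natDegree_C_mul_le _ _) ?_
  refine le_trans Polynomial.natDegree_map_le ?_
  unfold J
  refine Polynomial.natDegree_sum_le_of_forall_le _ _ ?_
  intro d _
  rw [Polynomial.natDegree_X_pow]
  exact h d

lemma six_count (X : HGraph) (d : X.Decomp) (W : Finset X.H)
    (hW : ∀ h, X.IsClosed d (X.circuitOf d h) → h ∈ W)
    (hsix : ∀ c, X.IsClosed d c →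
      6 ≤ (Finset.univ.filter fun h => X.circuitOf d h = c).card) :
    6 * X.ncircuits d ≤ W.card := by
  classical
  haveI : Finite (X.Circuits d) := inferInstanceAs (Finite (Quotient (X.dsetoid d)))
  haveI : Fintype (X.Circuits d) := Fintype.ofFinite _
  have hcard : X.ncircuits d
      = (Finset.univ.filter fun c : X.Circuits d => X.IsClosed d c).card := by
    rw [ncircuits, Nat.card_eq_fintype_card, Fintype.card_subtype]
  set s := Finset.univ.filter fun c : X.Circuits d => X.IsClosed d c with hs
  set F : X.Circuits d → Finset X.H :=
    fun c => Finset.univ.filter fun h => X.circuitOf d h = c with hF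
  have hdisj : ∀ c₁ ∈ s, ∀ c₂ ∈ s, c₁ ≠ c₂ → Disjoint (F c₁) (F c₂) := by
    intro c₁ _ c₂ _ hne
    rw [Finset.disjoint_left]
    intro h h1 h2
    rw [hF, Finset.mem_filter] at h1 h2
    exact hne (h1.2.symm.trans h2.2)
  have hsum : s.card * 6 ≤ ∑ c ∈ s, (F c).card := by
    have := Finset.card_nsmul_le_sum s (fun c => (F c).card) 6
      (fun c hc => hsix c (Finset.mem_filter.mp hc).2)
    simpa [smul_eq_mul] using this
  have hsub : s.biUnion F ⊆ W := by
    intro h hh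
    obtain ⟨c, hcs, hhc⟩ := Finset.mem_biUnion.mp hh
    rw [hF, Finset.mem_filter] at hhc
    refine hW h ?_
    rw [hhc.2]
    exact (Finset.mem_filter.mp hcs).2
  calc 6 * X.ncircuits d = s.card * 6 := by rw [hcard, mul_comm]
    _ ≤ ∑ c ∈ s, (F c).card := hsum
    _ = (s.biUnion F).card := (Finset.card_biUnion hdisj).symm
    _ ≤ W.card := Finset.card_le_card hsub

end HGraph

namespace HGraph

open Finset
open scoped Classical

lemma six_le (X : HGraph)
    (hloop : ∀ h, ¬ X.IsExternal h → X.vtx (X.edg h) ≠ X.vtx h)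
    (hpar : ∀ h₁ h₂, ¬ X.IsExternal h₁ → ¬ X.IsExternal h₂ → ¬ X.ParallelPair h₁ h₂)
    (d : X.Decomp) (c : X.Circuits d) (hc : X.IsClosed d c) :
    6 ≤ (Finset.univ.filter fun h => X.circuitOf d h = c).card := by
  classical
  obtain ⟨a, ha⟩ := Quotient.exists_rep c
  have ha : X.circuitOf d a = c := ha
  obtain ⟨hp2, hpne, hpv⟩ := d.2
  have einj : Function.Injective X.edg := Function.Involutive.injective X.edg_invol
  have pinj : Function.Injective d.1 := Function.Involutive.injective hp2
  set p : X.H → X.H := d.1 with hpdef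
  set b := X.edg a with hb
  set c' := p a with hc'
  set dd := X.edg c' with hdd
  set f := p b with hf
  set g6 := X.edg f with hg6
  -- memberships
  have mb : X.circuitOf d b = c := (X.circuitOf_edg_s12 d a).trans ha
  have mc : X.circuitOf d c' = c := (X.circuitOf_pair_s12 d a).trans ha
  have md : X.circuitOf d dd = c := (X.circuitOf_edg_s12 d c').trans mc
  have mf : X.circuitOf d f = c := (X.circuitOf_pair_s12 d b).trans mb
  have mg : X.circuitOf d g6 = c := (X.circuitOf_edg_s12 d f).trans mf
  -- internality
  have ia : ¬ X.IsExternal a := hc a ha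
  have ic : ¬ X.IsExternal c' := hc c' mc
  have iff' : ¬ X.IsExternal f := hc f mf
  -- K1 : for internal x, p x ≠ edg x
  have K1 : ∀ x, ¬ X.IsExternal x → p x ≠ X.edg x := by
    intro x hx hEq
    exact hloop x hx (by rw [← hEq, hpv x])
  -- distinctness
  have nba : b ≠ a := ia
  have nca : c' ≠ a := hpne a
  have ncb : c' ≠ b := K1 a ia
  have ndc : dd ≠ c' := ic
  have nda : dd ≠ a := by
    intro hEq
    have : c' = b := by
      have := congrArg X.edg hEq
      rw [hdd, X.edg_invol] at this
      rw [this, hb]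
    exact ncb this
  have ndb : dd ≠ b := fun hEq => nca (einj hEq)
  have nfb : f ≠ b := hpne b
  have nfa : f ≠ a := by
    intro hEq
    have : b = c' := by
      have := congrArg p hEq
      rw [hf, hp2] at this
      rw [this, hc']
    exact ncb this.symm
  have nfc : f ≠ c' := fun hEq => nba (pinj hEq)
  -- the parallel-pair argument
  have nfd : f ≠ dd := by
    intro hEq
    refine hpar a c' ia ic ⟨(hpv a).symm, ?_, nca, ncb⟩
    show X.vtx (X.edg a) = X.vtx (X.edg c')
    rw [← hb, ← hdd, ← hEq, hf, hpv]
  have ngf : g6 ≠ f := iff'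
  have nga : g6 ≠ a := by
    intro hEq
    have : f = b := by
      have := congrArg X.edg hEq
      rw [hg6, X.edg_invol] at this
      rw [this, hb]
    exact nfb this
  have ngb : g6 ≠ b := fun hEq => nfa (einj hEq)
  have ngc : g6 ≠ c' := by
    intro hEq
    have : f = dd := by
      have := congrArg X.edg hEq
      rw [hg6, X.edg_invol] at this
      rw [this, hdd]
    exact nfd this
  have ngd : g6 ≠ dd := fun hEq => nfc (einj hEq)
  -- assemble
  have hsub : ({a, b, c', dd, f, g6} : Finset X.H) ⊆
      Finset.univ.filter fun h => X.circuitOf d h = c := by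
    intro x hx
    simp only [Finset.mem_insert, Finset.mem_singleton] at hx
    rw [Finset.mem_filter]
    rcases hx with rfl | rfl | rfl | rfl | rfl | rfl <;>
      exact ⟨Finset.mem_univ _, by assumption⟩
  refine le_trans (le_of_eq ?_) (Finset.card_le_card hsub)
  have h1 : a ∉ ({b, c', dd, f, g6} : Finset X.H) := by
    simp only [Finset.mem_insert, Finset.mem_singleton]
    push_neg
    exact ⟨nba.symm ∘ Eq.symm ∘ Eq.symm, Ne.symm nca, Ne.symm nda, Ne.symm nfa, Ne.symm nga⟩
  have h2 : b ∉ ({c', dd, f, g6} : Finset X.H) := by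
    simp only [Finset.mem_insert, Finset.mem_singleton]
    push_neg
    exact ⟨Ne.symm ncb, Ne.symm ndb, Ne.symm nfb, Ne.symm ngb⟩
  have h3 : c' ∉ ({dd, f, g6} : Finset X.H) := by
    simp only [Finset.mem_insert, Finset.mem_singleton]
    push_neg
    exact ⟨Ne.symm ndc, Ne.symm nfc, Ne.symm ngc⟩
  have h4 : dd ∉ ({f, g6} : Finset X.H) := by
    simp only [Finset.mem_insert, Finset.mem_singleton]
    push_neg
    exact ⟨Ne.symm nfd, Ne.symm ngd⟩
  have h5 : f ∉ ({g6} : Finset X.H) := by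
    simp only [Finset.mem_singleton]
    exact Ne.symm ngf
  rw [Finset.card_insert_of_notMem h1, Finset.card_insert_of_notMem h2,
    Finset.card_insert_of_notMem h3, Finset.card_insert_of_notMem h4,
    Finset.card_insert_of_notMem h5, Finset.card_singleton]

end HGraph

namespace HGraph

open Finset
open scoped Classical

lemma extract (X : HGraph) :
    ∀ (n : ℕ) (E : Finset X.H), E.card ≤ n →
      (∀ h ∈ E, ¬ X.IsExternal h ∧ X.edg h ∈ E) →
      E.Nonempty → 2 * (E.image X.vtx).card ≤ E.card →
      ∃ E' : Finset X.H, E' ⊆ E ∧ E'.Nonempty ∧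
        (∀ h ∈ E', ¬ X.IsExternal h ∧ X.edg h ∈ E') ∧
        ∀ h ∈ E', 2 ≤ (E'.filter fun h' => X.vtx h' = X.vtx h).card := by
  intro n
  induction n with
  | zero =>
    intro E hc _ hne _
    exact absurd (Finset.card_pos.mpr hne) (by omega)
  | succ n ih =>
    intro E hcard hcl hne hcount
    by_cases hdeg : ∀ h ∈ E, 2 ≤ (E.filter fun h' => X.vtx h' = X.vtx h).card
    · exact ⟨E, subset_rfl, hne, hcl, hdeg⟩
    push_neg at hdeg
    obtain ⟨h₀, h₀E, hlt⟩ := hdeg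
    have h₀f : h₀ ∈ E.filter fun h' => X.vtx h' = X.vtx h₀ :=
      Finset.mem_filter.mpr ⟨h₀E, rfl⟩
    have huniq : ∀ h ∈ E, X.vtx h = X.vtx h₀ → h = h₀ := by
      intro h hE hv
      have hle : (E.filter fun h' => X.vtx h' = X.vtx h₀).card ≤ 1 := by omega
      exact Finset.card_le_one.mp hle h (Finset.mem_filter.mpr ⟨hE, hv⟩) h₀ h₀f
    have hev : X.edg h₀ ∈ E := (hcl h₀ h₀E).2
    have hne0 : X.edg h₀ ≠ h₀ := (hcl h₀ h₀E).1
    have hvne : X.vtx (X.edg h₀) ≠ X.vtx h₀ := fun hv => hne0 (huniq _ hev hv)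
    set E₁ := (E.erase h₀).erase (X.edg h₀) with hE₁
    have hmem₁ : ∀ x, x ∈ E₁ ↔ x ≠ X.edg h₀ ∧ x ≠ h₀ ∧ x ∈ E := by
      intro x
      simp [hE₁, Finset.mem_erase, and_assoc]
    have hsub₁ : E₁ ⊆ E := (Finset.erase_subset _ _).trans (Finset.erase_subset _ _)
    have hcard₁ : E₁.card = E.card - 2 := by
      rw [hE₁, Finset.card_erase_of_mem, Finset.card_erase_of_mem h₀E]
      · omega
      · exact Finset.mem_erase.mpr ⟨hne0, hev⟩
    have hcl₁ : ∀ h ∈ E₁, ¬ X.IsExternal h ∧ X.edg h ∈ E₁ := by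
      intro h hh
      obtain ⟨hne1, hne2, hE⟩ := (hmem₁ h).mp hh
      refine ⟨(hcl h hE).1, (hmem₁ _).mpr ⟨?_, ?_, (hcl h hE).2⟩⟩
      · intro hEq
        exact hne2 (Function.Involutive.injective X.edg_invol hEq)
      · intro hEq
        have h2 := congrArg X.edg hEq
        rw [X.edg_invol] at h2
        exact hne1 h2
    have himgsub : E₁.image X.vtx ⊆ (E.image X.vtx).erase (X.vtx h₀) := by
      intro u hu
      obtain ⟨x, hx, rfl⟩ := Finset.mem_image.mp hu
      obtain ⟨hne1, hne2, hEx⟩ := (hmem₁ x).mp hx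
      refine Finset.mem_erase.mpr ⟨?_, Finset.mem_image_of_mem _ hEx⟩
      intro hv
      exact hne2 (huniq x hEx hv)
    have hv0mem : X.vtx h₀ ∈ E.image X.vtx := Finset.mem_image_of_mem _ h₀E
    have himgcard : (E₁.image X.vtx).card ≤ (E.image X.vtx).card - 1 := by
      refine le_trans (Finset.card_le_card himgsub) ?_
      rw [Finset.card_erase_of_mem hv0mem]
    have himg2 : 2 ≤ (E.image X.vtx).card :=
      Finset.one_lt_card.mpr
        ⟨X.vtx h₀, hv0mem, X.vtx (X.edg h₀), Finset.mem_image_of_mem _ hev, hvne.symm⟩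
    have hEcard4 : 4 ≤ E.card := by omega
    have hne₁ : E₁.Nonempty := Finset.card_pos.mp (by omega)
    have hcount₁ : 2 * (E₁.image X.vtx).card ≤ E₁.card := by omega
    obtain ⟨E', hs, h1, h2, h3⟩ := ih E₁ (by omega) hcl₁ hne₁ hcount₁
    exact ⟨E', hs.trans hsub₁, h1, h2, h3⟩

lemma hasCycleIn_of (X : HGraph) (S : Set X.V) (E : Finset X.H) (hne : E.Nonempty)
    (hcl : ∀ h ∈ E, ¬ X.IsExternal h ∧ X.edg h ∈ E)
    (hS : ∀ h ∈ E, X.vtx h ∈ S)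
    (hcount : 2 * (E.image X.vtx).card ≤ E.card) : X.HasCycleIn S := by
  obtain ⟨E', hsub, hne', hcl', hdeg'⟩ := X.extract E.card E le_rfl hcl hne hcount
  exact ⟨E', hne',
    fun h hh => ⟨hS h (hsub hh), (hcl' h hh).1, (hcl' h hh).2⟩, hdeg'⟩

lemma filter_vtx_card (G : HGraph) (h4 : ∀ v, G.valence v = 4) (v : G.V) :
    (Finset.univ.filter fun h => G.vtx h = v).card = 4 := by
  rw [← Fintype.card_subtype]
  exact h4 v

lemma card_H_eq (G : HGraph) (L : ℕ) (h4 : ∀ v, G.valence v = 4)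
    (hV : Fintype.card G.V = L + 2) : Fintype.card G.H = 4 * L + 8 := by
  classical
  have key := Finset.card_eq_sum_card_fiberwise
    (s := (Finset.univ : Finset G.H)) (t := Finset.univ) (f := G.vtx)
    (fun x _ => Finset.mem_univ _)
  rw [← Finset.card_univ, key, Finset.sum_congr rfl
    (fun v _ => G.filter_vtx_card h4 v), Finset.sum_const, Finset.card_univ, hV,
    smul_eq_mul]
  ring

end HGraph

namespace HGraph

open Finset
open scoped Classical

lemma no_loop (G : HGraph) (L : ℕ) (hL : 1 < L) (hG : G.IsPrimitiveCompletion L) :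
    ∀ h, G.vtx (G.edg h) ≠ G.vtx h := by
  obtain ⟨⟨hvac, _hconn, h4, hV⟩, hcyc⟩ := hG
  intro h hloop
  set v := G.vtx h with hv
  have hintern : G.edg h ≠ h := hvac h
  -- a cycle inside {v}
  have cycS : G.HasCycleIn ↑({v} : Finset G.V) := by
    refine G.hasCycleIn_of _ ({h, G.edg h} : Finset G.H) ⟨h, by simp⟩ ?_ ?_ ?_
    · intro x hx
      simp only [Finset.mem_insert, Finset.mem_singleton] at hx
      rcases hx with rfl | rfl
      · exact ⟨hvac x, by simp⟩
      · exact ⟨hvac _, by simp [G.edg_invol]⟩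
    · intro x hx
      simp only [Finset.mem_insert, Finset.mem_singleton] at hx
      rcases hx with rfl | rfl
      · simp [hv]
      · simp only [Finset.coe_singleton, Set.mem_singleton_iff]
        exact hloop
    · have hsub : ({h, G.edg h} : Finset G.H).image G.vtx ⊆ {v} := by
        intro u hu
        obtain ⟨x, hx, rfl⟩ := Finset.mem_image.mp hu
        simp only [Finset.mem_insert, Finset.mem_singleton] at hx ⊢
        rcases hx with rfl | rfl
        · rfl
        · exact hloop
      have h2 : ({h, G.edg h} : Finset G.H).card = 2 := by
        rw [Finset.card_insert_of_notMem (by simpa using Ne.symm hintern),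
          Finset.card_singleton]
      have := Finset.card_le_card hsub
      simp only [Finset.card_singleton] at this
      omega
  -- a cycle in the complement
  have hcardH : Fintype.card G.H = 4 * L + 8 := G.card_H_eq L h4 hV
  set E₀ := Finset.univ.filter fun x => G.vtx x ≠ v ∧ G.vtx (G.edg x) ≠ v with hE₀
  have hE₀cl : ∀ x ∈ E₀, ¬ G.IsExternal x ∧ G.edg x ∈ E₀ := by
    intro x hx
    rw [hE₀, Finset.mem_filter] at hx
    refine ⟨hvac x, ?_⟩
    rw [hE₀, Finset.mem_filter]
    exact ⟨Finset.mem_univ _, hx.2.2, by rw [G.edg_invol]; exact hx.2.1⟩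
  have hE₀card : 4 * L ≤ E₀.card := by
    have key : E₀.card + (Finset.univ.filter fun x : G.H =>
        ¬(G.vtx x ≠ v ∧ G.vtx (G.edg x) ≠ v)).card = 4 * L + 8 := by
      rw [hE₀, Finset.card_filter_add_card_filter_not, Finset.card_univ, hcardH]
    have hBsub : (Finset.univ.filter fun x : G.H =>
        ¬(G.vtx x ≠ v ∧ G.vtx (G.edg x) ≠ v)) ⊆
        (Finset.univ.filter fun x => G.vtx x = v) ∪
        ((Finset.univ.filter fun x => G.vtx x = v).image G.edg) := by
      intro x hx
      rw [Finset.mem_filter] at hx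
      rw [Finset.mem_union]
      rcases not_and_or.mp hx.2 with hc | hc
      · exact Or.inl (Finset.mem_filter.mpr ⟨Finset.mem_univ _, not_not.mp hc⟩)
      · refine Or.inr (Finset.mem_image.mpr ⟨G.edg x,
          Finset.mem_filter.mpr ⟨Finset.mem_univ _, not_not.mp hc⟩, G.edg_invol x⟩)
    have hA := G.filter_vtx_card h4 v
    have hBle : ((Finset.univ.filter fun x => G.vtx x = v).image G.edg).card ≤ 4 := by
      refine le_trans (Finset.card_image_le) (by rw [hA])
    have hUnion := Finset.card_union_le
      (Finset.univ.filter fun x : G.H => G.vtx x = v)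
      ((Finset.univ.filter fun x : G.H => G.vtx x = v).image G.edg)
    have hBcard := Finset.card_le_card hBsub
    omega
  have cycSc : G.HasCycleIn ↑(({v} : Finset G.V)ᶜ) := by
    refine G.hasCycleIn_of _ E₀ (Finset.card_pos.mp (by omega)) hE₀cl ?_ ?_
    · intro x hx
      rw [hE₀, Finset.mem_filter] at hx
      simp only [Finset.coe_compl, Finset.coe_singleton, Set.mem_compl_iff,
        Set.mem_singleton_iff]
      exact hx.2.1
    · have himg : E₀.image G.vtx ⊆ Finset.univ.erase v := by
        intro u hu
        obtain ⟨x, hx, rfl⟩ := Finset.mem_image.mp hu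
        rw [hE₀, Finset.mem_filter] at hx
        exact Finset.mem_erase.mpr ⟨hx.2.1, Finset.mem_univ _⟩
      have := Finset.card_le_card himg
      rw [Finset.card_erase_of_mem (Finset.mem_univ v), Finset.card_univ, hV] at this
      omega
  have h6 := hcyc {v} cycS cycSc
  -- but the cut has size ≤ 2
  have hcut : G.cutSize {v} ≤ 2 := by
    have hsub2 : (Finset.univ.filter fun x : G.H =>
        G.vtx x ∈ ({v} : Finset G.V) ∧ G.vtx (G.edg x) ∉ ({v} : Finset G.V)) ⊆
        ((Finset.univ.filter fun x => G.vtx x = v).erase h).erase (G.edg h) := by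
      intro x hx
      rw [Finset.mem_filter] at hx
      simp only [Finset.mem_singleton] at hx
      refine Finset.mem_erase.mpr ⟨?_, Finset.mem_erase.mpr ⟨?_,
        Finset.mem_filter.mpr ⟨Finset.mem_univ _, hx.2.1⟩⟩⟩
      · intro hEq
        exact hx.2.2 (by rw [hEq, G.edg_invol])
      · intro hEq
        exact hx.2.2 (by rw [hEq]; exact hloop)
    have hle := Finset.card_le_card hsub2
    have hA := G.filter_vtx_card h4 v
    have hhm : h ∈ Finset.univ.filter fun x : G.H => G.vtx x = v :=
      Finset.mem_filter.mpr ⟨Finset.mem_univ _, rfl⟩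
    have hem : G.edg h ∈ (Finset.univ.filter fun x : G.H => G.vtx x = v).erase h :=
      Finset.mem_erase.mpr ⟨hintern, Finset.mem_filter.mpr ⟨Finset.mem_univ _, hloop⟩⟩
    rw [cutSize]
    rw [Finset.card_erase_of_mem hem, Finset.card_erase_of_mem hhm, hA] at hle
    omega
  omega

end HGraph

namespace HGraph

open Finset
open scoped Classical

lemma no_parallel (G : HGraph) (L : ℕ) (hL : 1 < L) (hG : G.IsPrimitiveCompletion L) :
    ∀ h₁ h₂, ¬ G.ParallelPair h₁ h₂ := by
  have hnl := G.no_loop L hL hG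
  obtain ⟨⟨hvac, _hconn, h4, hV⟩, hcyc⟩ := hG
  rintro h₁ h₂ ⟨hv12, he12, hne21, hne2e⟩
  have einj : Function.Injective G.edg := Function.Involutive.injective G.edg_invol
  set v := G.vtx h₁ with hvdef
  set w := G.vtx (G.edg h₁) with hwdef
  have hvw : w ≠ v := hnl h₁
  set S : Finset G.V := {v, w} with hS
  set P : Finset G.H := {h₁, G.edg h₁, h₂, G.edg h₂} with hP
  -- basic distinctness
  have ne_e1 : G.edg h₁ ≠ h₁ := hvac h₁
  have ne_e2 : G.edg h₂ ≠ h₂ := hvac h₂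
  have ne_e2_1 : G.edg h₂ ≠ h₁ := by
    intro hEq
    exact hne2e (by rw [← hEq, G.edg_invol])
  have ne_e2_e1 : G.edg h₂ ≠ G.edg h₁ := fun hEq => hne21 (einj hEq)
  have hPcard : P.card = 4 := by
    rw [hP, Finset.card_insert_of_notMem (by
        simp only [Finset.mem_insert, Finset.mem_singleton]
        push_neg
        exact ⟨Ne.symm ne_e1, Ne.symm hne21, Ne.symm ne_e2_1⟩),
      Finset.card_insert_of_notMem (by
        simp only [Finset.mem_insert, Finset.mem_singleton]
        push_neg
        exact ⟨Ne.symm hne2e, Ne.symm ne_e2_e1⟩),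
      Finset.card_insert_of_notMem (by simpa using Ne.symm ne_e2),
      Finset.card_singleton]
  -- vertex locations of P
  have hvtx1 : G.vtx h₂ = v := hv12.symm
  have hvtx2 : G.vtx (G.edg h₂) = w := he12.symm
  -- A and B
  set A : Finset G.H := Finset.univ.filter fun x => G.vtx x = v ∨ G.vtx x = w with hA
  have hAcard : A.card = 8 := by
    rw [hA, Finset.filter_or, Finset.card_union_of_disjoint (by
      rw [Finset.disjoint_left]
      intro x hx1 hx2
      rw [Finset.mem_filter] at hx1 hx2
      exact hvw (hx2.2 ▸ hx1.2 ▸ rfl)), G.filter_vtx_card h4 v, G.filter_vtx_card h4 w]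
  set B : Finset G.H := A.image G.edg with hB
  have hBcard : B.card = 8 := by
    rw [hB, Finset.card_image_of_injective _ einj, hAcard]
  have hPA : P ⊆ A := by
    intro x hx
    rw [hP] at hx
    simp only [Finset.mem_insert, Finset.mem_singleton] at hx
    rw [hA, Finset.mem_filter]
    refine ⟨Finset.mem_univ _, ?_⟩
    rcases hx with rfl | rfl | rfl | rfl
    · exact Or.inl rfl
    · exact Or.inr rfl
    · exact Or.inl hvtx1
    · exact Or.inr hvtx2
  have hPedg : ∀ x ∈ P, G.edg x ∈ P := by
    intro x hx
    rw [hP] at hx ⊢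
    simp only [Finset.mem_insert, Finset.mem_singleton] at hx ⊢
    rcases hx with rfl | rfl | rfl | rfl
    · tauto
    · rw [G.edg_invol]; tauto
    · tauto
    · rw [G.edg_invol]; tauto
  have hPB : P ⊆ B := by
    intro x hx
    rw [hB]
    exact Finset.mem_image.mpr ⟨G.edg x, Finset.mem_of_subset hPA (hPedg x hx), G.edg_invol x⟩
  have hPvtxS : ∀ x ∈ P, G.vtx x ∈ S ∧ G.vtx (G.edg x) ∈ S := by
    intro x hx
    rw [hP] at hx
    simp only [Finset.mem_insert, Finset.mem_singleton] at hx
    rw [hS]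
    simp only [Finset.mem_insert, Finset.mem_singleton]
    rcases hx with rfl | rfl | rfl | rfl
    · exact ⟨Or.inl rfl, Or.inr rfl⟩
    · rw [G.edg_invol]; exact ⟨Or.inr rfl, Or.inl rfl⟩
    · exact ⟨Or.inl hvtx1, Or.inr hvtx2⟩
    · rw [G.edg_invol]
      exact ⟨Or.inr hvtx2, Or.inl hvtx1⟩
  -- cycle inside S
  have cycS : G.HasCycleIn ↑S := by
    refine G.hasCycleIn_of _ P ⟨h₁, by rw [hP]; simp⟩ ?_ ?_ ?_
    · exact fun x hx => ⟨hvac x, hPedg x hx⟩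
    · intro x hx
      have := (hPvtxS x hx).1
      simpa using this
    · have himg : P.image G.vtx ⊆ S := by
        intro u hu
        obtain ⟨x, hx, rfl⟩ := Finset.mem_image.mp hu
        exact (hPvtxS x hx).1
      have := Finset.card_le_card himg
      have hScard : S.card ≤ 2 := Finset.card_insert_le _ _ |>.trans (by simp)
      omega
  -- cycle inside the complement of S
  have hcardH : Fintype.card G.H = 4 * L + 8 := G.card_H_eq L h4 hV
  set E₀ := Finset.univ.filter fun x =>
    (G.vtx x ≠ v ∧ G.vtx x ≠ w) ∧ (G.vtx (G.edg x) ≠ v ∧ G.vtx (G.edg x) ≠ w) with hE₀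
  have hE₀cl : ∀ x ∈ E₀, ¬ G.IsExternal x ∧ G.edg x ∈ E₀ := by
    intro x hx
    rw [hE₀, Finset.mem_filter] at hx
    refine ⟨hvac x, ?_⟩
    rw [hE₀, Finset.mem_filter]
    refine ⟨Finset.mem_univ _, hx.2.2, ?_⟩
    rw [G.edg_invol]
    exact hx.2.1
  have hE₀card : 4 * L - 4 ≤ E₀.card := by
    have key : E₀.card + (Finset.univ.filter fun x : G.H =>
        ¬((G.vtx x ≠ v ∧ G.vtx x ≠ w) ∧ (G.vtx (G.edg x) ≠ v ∧ G.vtx (G.edg x) ≠ w))).card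
        = 4 * L + 8 := by
      rw [hE₀, Finset.card_filter_add_card_filter_not, Finset.card_univ, hcardH]
    have hsubBP : (Finset.univ.filter fun x : G.H =>
        ¬((G.vtx x ≠ v ∧ G.vtx x ≠ w) ∧ (G.vtx (G.edg x) ≠ v ∧ G.vtx (G.edg x) ≠ w)))
        ⊆ A ∪ (B \ P) := by
      intro x hx
      rw [Finset.mem_filter] at hx
      rw [Finset.mem_union]
      have hxA : G.vtx x = v ∨ G.vtx x = w → x ∈ A := fun hc =>
        Finset.mem_filter.mpr ⟨Finset.mem_univ _, hc⟩
      rcases not_and_or.mp hx.2 with hc | hc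
      · exact Or.inl (hxA (by tauto))
      · have hxB : x ∈ B := by
          rw [hB]
          refine Finset.mem_image.mpr ⟨G.edg x, ?_, G.edg_invol x⟩
          exact Finset.mem_filter.mpr ⟨Finset.mem_univ _, by tauto⟩
        by_cases hxP : x ∈ P
        · exact Or.inl (Finset.mem_of_subset hPA hxP)
        · exact Or.inr (Finset.mem_sdiff.mpr ⟨hxB, hxP⟩)
    have hBPcard : (B \ P).card = 4 := by
      rw [Finset.card_sdiff_of_subset hPB, hBcard, hPcard]
    have hUnion := Finset.card_union_le A (B \ P)
    have hle := Finset.card_le_card hsubBP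
    omega
  have cycSc : G.HasCycleIn ↑(Sᶜ) := by
    refine G.hasCycleIn_of _ E₀ (Finset.card_pos.mp (by omega)) hE₀cl ?_ ?_
    · intro x hx
      rw [hE₀, Finset.mem_filter] at hx
      simp only [Finset.coe_compl, Set.mem_compl_iff, Finset.mem_coe, hS,
        Finset.mem_insert, Finset.mem_singleton]
      tauto
    · have himg : E₀.image G.vtx ⊆ Finset.univ \ S := by
        intro u hu
        obtain ⟨x, hx, rfl⟩ := Finset.mem_image.mp hu
        rw [hE₀, Finset.mem_filter] at hx
        rw [Finset.mem_sdiff, hS]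
        simp only [Finset.mem_insert, Finset.mem_singleton]
        exact ⟨Finset.mem_univ _, by tauto⟩
      have hle := Finset.card_le_card himg
      have hScard : S.card = 2 := by
        rw [hS, Finset.card_insert_of_notMem (by simpa using Ne.symm hvw),
          Finset.card_singleton]
      rw [Finset.card_sdiff_of_subset (Finset.subset_univ _), Finset.card_univ, hV, hScard] at hle
      omega
  have h6 := hcyc S cycS cycSc
  -- but the cut has size ≤ 4
  have hcut : G.cutSize S ≤ 4 := by
    have hsub2 : (Finset.univ.filter fun x : G.H =>
        G.vtx x ∈ S ∧ G.vtx (G.edg x) ∉ S) ⊆ A \ P := by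
      intro x hx
      rw [Finset.mem_filter] at hx
      refine Finset.mem_sdiff.mpr ⟨?_, ?_⟩
      · refine Finset.mem_filter.mpr ⟨Finset.mem_univ _, ?_⟩
        have := hx.2.1
        rw [hS] at this
        simpa using this
      · intro hxP
        exact hx.2.2 (hPvtxS x hxP).2
    have hle := Finset.card_le_card hsub2
    have hAPcard : (A \ P).card = 4 := by
      rw [Finset.card_sdiff_of_subset hPA, hAcard, hPcard]
    rw [cutSize]
    omega
  omega

end HGraph

namespace HGraph

open Finset
open scoped Classical

lemma decompletion_external_iff (G : HGraph) (v : G.V) (hvac : G.IsVacuum)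
    (x : (G.decompletion v).H) :
    (G.decompletion v).IsExternal x ↔ G.vtx (G.edg x.1) = v := by
  show (if hc : G.vtx (G.edg x.1) = v then x else ⟨G.edg x.1, hc⟩) = x ↔ _
  by_cases hc : G.vtx (G.edg x.1) = v
  · simp [hc]
  · rw [show (if hc : G.vtx (G.edg x.1) = v then x else ⟨G.edg x.1, hc⟩) = (⟨G.edg x.1, hc⟩ : (G.decompletion v).H) from dif_neg hc]
    constructor
    · intro hEq
      exact absurd (congrArg Subtype.val hEq) (hvac x.1)
    · intro hc'
      exact absurd hc' hc

lemma decompletion_edg_val (G : HGraph) (v : G.V) (hvac : G.IsVacuum)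
    (x : (G.decompletion v).H) (hx : ¬ (G.decompletion v).IsExternal x) :
    ((G.decompletion v).edg x).1 = G.edg x.1 := by
  have hc : G.vtx (G.edg x.1) ≠ v :=
    fun hc => hx ((G.decompletion_external_iff v hvac x).mpr hc)
  rw [show (G.decompletion v).edg x = ⟨G.edg x.1, hc⟩ from dif_neg hc]

lemma decompletion_no_loop (G : HGraph) (v : G.V) (hvac : G.IsVacuum)
    (hnl : ∀ h, G.vtx (G.edg h) ≠ G.vtx h) :
    ∀ x, ¬ (G.decompletion v).IsExternal x →
      (G.decompletion v).vtx ((G.decompletion v).edg x) ≠ (G.decompletion v).vtx x := by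
  intro x hx hEq
  apply hnl x.1
  have h1 : G.vtx (((G.decompletion v).edg x)).1 = G.vtx x.1 := congrArg Subtype.val hEq
  rwa [G.decompletion_edg_val v hvac x hx] at h1

lemma decompletion_no_parallel (G : HGraph) (v : G.V) (hvac : G.IsVacuum)
    (hnp : ∀ h₁ h₂, ¬ G.ParallelPair h₁ h₂) :
    ∀ x₁ x₂, ¬ (G.decompletion v).IsExternal x₁ → ¬ (G.decompletion v).IsExternal x₂ →
      ¬ (G.decompletion v).ParallelPair x₁ x₂ := by
  rintro x₁ x₂ h1 h2 ⟨pv, pe, pn1, pn2⟩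
  apply hnp x₁.1 x₂.1
  have c1 : G.vtx x₁.1 = G.vtx x₂.1 := congrArg Subtype.val pv
  have c2 : G.vtx (((G.decompletion v).edg x₁)).1
      = G.vtx (((G.decompletion v).edg x₂)).1 := congrArg Subtype.val pe
  rw [G.decompletion_edg_val v hvac x₁ h1, G.decompletion_edg_val v hvac x₂ h2] at c2
  refine ⟨c1, c2, fun hEq => pn1 (Subtype.ext hEq), ?_⟩
  intro hEq
  apply pn2
  apply Subtype.ext
  rw [G.decompletion_edg_val v hvac x₁ h1]
  exact hEq

lemma decompletion_ext_card (G : HGraph) (v : G.V) (hvac : G.IsVacuum)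
    (hnl : ∀ h, G.vtx (G.edg h) ≠ G.vtx h) (h4 : ∀ u, G.valence u = 4) :
    (Finset.univ.filter fun x : (G.decompletion v).H =>
      (G.decompletion v).IsExternal x).card = 4 := by
  rw [← Fintype.card_subtype]
  have E : {x : (G.decompletion v).H // (G.decompletion v).IsExternal x}
      ≃ {k : G.H // G.vtx k = v} :=
    { toFun := fun x => ⟨G.edg x.1.1, (G.decompletion_external_iff v hvac x.1).mp x.2⟩
      invFun := fun k => ⟨⟨G.edg k.1, fun hEq => hnl k.1 (hEq.trans k.2.symm)⟩,
        (G.decompletion_external_iff v hvac _).mpr (by rw [G.edg_invol]; exact k.2)⟩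
      left_inv := fun x => by
        apply Subtype.ext
        apply Subtype.ext
        show G.edg (G.edg x.1.1) = x.1.1
        rw [G.edg_invol]
      right_inv := fun k => by
        apply Subtype.ext
        show G.edg (G.edg k.1) = k.1
        rw [G.edg_invol] }
  rw [Fintype.card_congr E]
  exact h4 v

lemma decompletion_card_H (G : HGraph) (v : G.V) (L : ℕ)
    (h4 : ∀ u, G.valence u = 4) (hV : Fintype.card G.V = L + 2) :
    Fintype.card (G.decompletion v).H = 4 * L + 4 := by
  have hcardH : Fintype.card G.H = 4 * L + 8 := G.card_H_eq L h4 hV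
  have key := Finset.card_filter_add_card_filter_not
    (s := (Finset.univ : Finset G.H)) (p := fun h => G.vtx h = v)
  rw [Finset.card_univ, hcardH, G.filter_vtx_card h4 v] at key
  have : Fintype.card (G.decompletion v).H
      = (Finset.univ.filter fun h : G.H => ¬ G.vtx h = v).card := by
    exact Fintype.card_subtype _
  omega

lemma decompletion_int_card (G : HGraph) (v : G.V) (L : ℕ) (hvac : G.IsVacuum)
    (hnl : ∀ h, G.vtx (G.edg h) ≠ G.vtx h) (h4 : ∀ u, G.valence u = 4)
    (hV : Fintype.card G.V = L + 2) :
    (Finset.univ.filter fun x : (G.decompletion v).H =>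
      ¬ (G.decompletion v).IsExternal x).card = 4 * L := by
  have key := Finset.card_filter_add_card_filter_not
    (s := (Finset.univ : Finset (G.decompletion v).H))
    (p := fun x => (G.decompletion v).IsExternal x)
  rw [Finset.card_univ, G.decompletion_card_H v L h4 hV,
    G.decompletion_ext_card v hvac hnl h4] at key
  omega

lemma decompletion_pair_not_ext (G : HGraph) (v : G.V) (hvac : G.IsVacuum)
    (hnp : ∀ h₁ h₂, ¬ G.ParallelPair h₁ h₂) (d : (G.decompletion v).Decomp) :
    ∀ x, (G.decompletion v).IsExternal x → ¬ (G.decompletion v).IsExternal (d.1 x) := by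
  intro x hx hpx
  have einj : Function.Injective G.edg := Function.Involutive.injective G.edg_invol
  have hk1v : G.vtx (G.edg x.1) = v := (G.decompletion_external_iff v hvac x).mp hx
  have hk2v : G.vtx (G.edg (d.1 x).1) = v := (G.decompletion_external_iff v hvac _).mp hpx
  apply hnp (G.edg x.1) (G.edg (d.1 x).1)
  have hv : G.vtx (d.1 x).1 = G.vtx x.1 := congrArg Subtype.val (d.2.2.2 x)
  refine ⟨hk1v.trans hk2v.symm, ?_, ?_, ?_⟩
  · rw [G.edg_invol, G.edg_invol]
    exact hv.symm
  · intro hEq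
    exact d.2.2.1 x (Subtype.ext (einj hEq))
  · rw [G.edg_invol]
    intro hEq
    rw [hEq] at hk2v
    exact x.2 hk2v

end HGraph

/-- Let `G` be a primitive `L`-loop completion with `L > 1` and
let `g` be any decompletion of `G`.  Then the degree in `N` of `T(G,N)` is at most
`(2L+4)/3` and the degree in `N` of `T(g,N)` is at most `(2L-2)/3`; equivalently,
every decomposition of `G` has at most `⌊(2L+4)/3⌋` circuits. -/
theorem primitive_symmetry_factor_degree_bound (L : ℕ) (hL : 1 < L) (G : HGraph)
    (hG : G.IsPrimitiveCompletion L) :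
    3 * G.T.natDegree ≤ 2 * L + 4 ∧
    (∀ v : G.V, 3 * (G.decompletion v).T.natDegree ≤ 2 * L - 2) ∧
    ∀ d : G.Decomp, G.ncircuits d ≤ (2 * L + 4) / 3 := by
  have hnl := G.no_loop L hL hG
  have hnp := G.no_parallel L hL hG
  obtain ⟨⟨hvac, _hconn, h4, hV⟩, _hcyc⟩ := hG
  have hcardH : Fintype.card G.H = 4 * L + 8 := G.card_H_eq L h4 hV
  have hbound : ∀ d : G.Decomp, 6 * G.ncircuits d ≤ 4 * L + 8 := by
    intro d
    have h1 := G.six_count d Finset.univ (fun h _ => Finset.mem_univ h)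
      (fun c hc => G.six_le (fun h _ => hnl h) (fun h₁ h₂ _ _ => hnp h₁ h₂) d c hc)
    rwa [Finset.card_univ, hcardH] at h1
  refine ⟨?_, ?_, ?_⟩
  · have hdeg := G.natDegree_T_le ((2 * L + 4) / 3) (fun d => by
      have := hbound d; omega)
    omega
  · intro v
    set g := G.decompletion v with hg
    have hgbound : ∀ d : g.Decomp, 6 * g.ncircuits d ≤ 4 * L - 4 := by
      intro d
      set Tb : Finset g.H := (Finset.univ.filter fun x => g.IsExternal x).image d.1
        with hTb
      set W : Finset g.H := (Finset.univ.filter fun x => ¬ g.IsExternal x) \ Tb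
        with hW
      have hTbint : Tb ⊆ Finset.univ.filter fun x => ¬ g.IsExternal x := by
        intro y hy
        rw [hTb] at hy
        obtain ⟨x, hx, rfl⟩ := Finset.mem_image.mp hy
        rw [Finset.mem_filter] at hx ⊢
        exact ⟨Finset.mem_univ _, G.decompletion_pair_not_ext v hvac hnp d x hx.2⟩
      have hTbcard : Tb.card = 4 := by
        rw [hTb, Finset.card_image_of_injective _
          (Function.Involutive.injective d.2.1),
          G.decompletion_ext_card v hvac hnl h4]
      have hWcard : W.card = 4 * L - 4 := by
        rw [hW, Finset.card_sdiff_of_subset hTbint,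
          G.decompletion_int_card v L hvac hnl h4 hV, hTbcard]
      have h1 := g.six_count d W ?_ ?_
      · rwa [hWcard] at h1
      · intro h hcl
        rw [hW, Finset.mem_sdiff, Finset.mem_filter]
        refine ⟨⟨Finset.mem_univ _, hcl h rfl⟩, ?_⟩
        intro hmem
        rw [hTb] at hmem
        obtain ⟨x, hx, hEq⟩ := Finset.mem_image.mp hmem
        rw [Finset.mem_filter] at hx
        have : g.circuitOf d x = g.circuitOf d h := by
          rw [← hEq, g.circuitOf_pair_s12 d x]
        exact (this ▸ hcl) x rfl hx.2
      · exact fun c hc => g.six_le (G.decompletion_no_loop v hvac hnl)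
          (G.decompletion_no_parallel v hvac hnp) d c hc
    have hdeg := g.natDegree_T_le ((2 * L - 2) / 3) (fun d => by
      have := hgbound d; omega)
    omega
  · intro d
    have := hbound d
    omega
end

section
/- Fix a real number N > 0 and for each natural number n define z_n := (∏_{k=0}^{2n−1}(N+2k)) / (n!·24^n). Then z_n is asymptotic to 3^{(N−1)/2}·(2/3)^{n+(N−1)/2}·Γ(n+(N−1)/2) / (√(2π)·Γ(N/2)) as n → ∞; that is, the ratio of z_n to this expression tends to 1 as n → ∞. -/
/-!
Since `∏_{k<2n} (N + 2k) = 4ⁿ Γ(N/2 + 2n) / Γ(N/2)`, Legendre's duplication formula applied to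
`Γ(2(n + N/4))` shows that the ratio in question is exactly
`Γ(n + N/4) Γ(n + N/4 + 1/2) / (Γ(n + 1) Γ(n + (N-1)/2))`, all powers of `2`, `3`, `π` and the
factor `Γ(N/2)` cancelling. Euler's limit formula gives `Γ(n + a) ~ Γ(n) nᵃ` for `a > 1`, and
`Γ(x + 1) = x Γ(x)` extends this to every real `a`. As `N/4 + (N/4 + 1/2) = 1 + (N-1)/2`,
the ratio tends to `1`.
-/

open Real Filter Finset Asymptotics
open scoped Nat Topology

namespace Real

theorem Gamma_mul_prod_range_add (s : ℝ) (m : ℕ) (hs : ∀ k < m, s + k ≠ 0) :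
    Gamma s * ∏ k ∈ range m, (s + k) = Gamma (s + m) := by
  induction m with
  | zero => simp
  | succ m ih =>
    rw [prod_range_succ, ← mul_assoc, ih fun k hk => hs k (by omega), Nat.cast_succ, ← add_assoc,
      Gamma_add_one (hs m (by omega)), mul_comm]

theorem Gamma_nat_add_one_add_mul_GammaSeq {s : ℝ} (hs : 0 < s) (n : ℕ) :
    Gamma (n + 1 + s) * GammaSeq s n = Gamma s * (n ^ s * n !) := by
  rw [GammaSeq, show (n : ℝ) + 1 + s = s + (n + 1 : ℕ) by push_cast; ring,
    ← Gamma_mul_prod_range_add s (n + 1) fun k _ => by positivity]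
  field_simp

theorem isEquivalent_Gamma_nat_add_of_one_lt {a : ℝ} (ha : 1 < a) :
    (fun n : ℕ => Gamma (n + a)) ~[atTop] fun n => Gamma n * (n : ℝ) ^ a := by
  have hs : 0 < a - 1 := sub_pos.mpr ha
  have hG := Gamma_pos_of_pos hs
  have hlim :=
    (tendsto_const_nhds (x := Gamma (a - 1))).div (GammaSeq_tendsto_Gamma (a - 1)) hG.ne'
  rw [div_self hG.ne'] at hlim
  refine isEquivalent_of_tendsto_one (hlim.congr' ?_)
  filter_upwards [eventually_ne_atTop 0] with n hn
  have hn' : (0 : ℝ) < n := by positivity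
  have hseq := Gamma_nat_add_one_add_mul_GammaSeq hs n
  rw [add_add_sub_cancel] at hseq
  have hseq_ne : GammaSeq (a - 1) n ≠ 0 := by
    rintro h
    rw [h, mul_zero] at hseq
    exact (mul_pos hG (by positivity)).ne' hseq.symm
  have hfact : Gamma n * (n : ℝ) ^ a = n ^ (a - 1) * n ! := by
    rw [rpow_sub_one hn'.ne', ← Gamma_nat_eq_factorial, Gamma_add_one hn'.ne']
    field_simp
  simp only [Pi.div_apply]
  rw [hfact, div_eq_div_iff hseq_ne (by positivity), ← hseq, mul_comm]

theorem isEquivalent_Gamma_nat_add_of_add_one {a : ℝ}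
    (h : (fun n : ℕ => Gamma (n + (a + 1))) ~[atTop] fun n => Gamma n * (n : ℝ) ^ (a + 1)) :
    (fun n : ℕ => Gamma (n + a)) ~[atTop] fun n => Gamma n * (n : ℝ) ^ a := by
  have hlin : (fun n : ℕ => (n : ℝ) + a) ~[atTop] fun n => (n : ℝ) :=
    IsEquivalent.refl.add_const_of_norm_tendsto_atTop
      (tendsto_norm_atTop_atTop.comp tendsto_natCast_atTop_atTop)
  refine ((h.div hlin).congr_left ?_).congr_right ?_
  · filter_upwards [eventually_gt_atTop ⌈-a⌉₊] with n hn
    have hna : (n : ℝ) + a ≠ 0 := by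
      have := Nat.lt_of_ceil_lt hn
      linarith
    simp only [Pi.div_apply]
    rw [← add_assoc, Gamma_add_one hna, mul_div_cancel_left₀ _ hna]
  · filter_upwards [eventually_ne_atTop 0] with n hn
    have hn' : (n : ℝ) ≠ 0 := by exact_mod_cast hn
    simp only [Pi.div_apply]
    rw [rpow_add_one hn', ← mul_assoc, mul_div_cancel_right₀ _ hn']

theorem isEquivalent_Gamma_nat_add (a : ℝ) :
    (fun n : ℕ => Gamma (n + a)) ~[atTop] fun n => Gamma n * (n : ℝ) ^ a := by
  obtain ⟨k, hk⟩ := exists_nat_gt (1 - a)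
  induction k generalizing a with
  | zero => exact isEquivalent_Gamma_nat_add_of_one_lt (by push_cast at hk; linarith)
  | succ k ih =>
    exact isEquivalent_Gamma_nat_add_of_add_one (ih (a + 1) (by push_cast at hk; linarith))

theorem tendsto_Gamma_nat_add_mul_div_of_add_eq {a b c d : ℝ} (h : a + b = c + d) :
    Tendsto (fun n : ℕ => Gamma (n + a) * Gamma (n + b) / (Gamma (n + c) * Gamma (n + d)))
      atTop (𝓝 1) := by
  have hequiv := ((isEquivalent_Gamma_nat_add a).mul (isEquivalent_Gamma_nat_add b)).div
    ((isEquivalent_Gamma_nat_add c).mul (isEquivalent_Gamma_nat_add d))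
  refine hequiv.symm.tendsto_nhds (tendsto_const_nhds.congr' ?_)
  filter_upwards [eventually_gt_atTop 0] with n hn
  have hn' : (0 : ℝ) < n := by exact_mod_cast hn
  have hG := Gamma_pos_of_pos hn'
  simp only [Pi.div_apply, Pi.mul_apply]
  rw [mul_mul_mul_comm, mul_mul_mul_comm (Gamma n) _ (Gamma n), ← rpow_add hn', ← rpow_add hn', h,
    div_self (by positivity)]

end Real

theorem prod_range_div_factorial_mul_eq_Gamma {N : ℝ} (hN : 0 < N) (n : ℕ) :
    (∏ k ∈ range (2 * n), (N + 2 * (k : ℝ))) / ((n ! : ℝ) * 24 ^ n) =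
      3 ^ ((N - 1) / 2) * (2 / 3 : ℝ) ^ ((n : ℝ) + (N - 1) / 2) / (√(2 * π) * Gamma (N / 2)) *
        (Gamma (n + N / 4) * Gamma (n + N / 4 + 1 / 2) / Gamma (n + 1)) := by
  have hprod : ∏ k ∈ range (2 * n), (N + 2 * (k : ℝ)) =
      4 ^ n * (Gamma (N / 2 + (2 * n : ℕ)) / Gamma (N / 2)) := by
    have hhalf : ∀ k ∈ range (2 * n), N + 2 * (k : ℝ) = 2 * (N / 2 + k) := fun k _ => by ring
    rw [← Gamma_mul_prod_range_add _ _ fun k _ => by positivity,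
      mul_div_cancel_left₀ _ (Gamma_pos_of_pos (by positivity)).ne', prod_congr rfl hhalf,
      prod_mul_distrib, prod_const, card_range, pow_mul]
    norm_num
  have hdup : Gamma (n + N / 4) * Gamma (n + N / 4 + 1 / 2) =
      Gamma (N / 2 + (2 * n : ℕ)) * 2 ^ (1 - 2 * ((n : ℝ) + N / 4)) * √π := by
    rw [Gamma_mul_Gamma_add_half]
    congr 3
    push_cast
    ring
  -- On logarithms the powers of `3` cancel and those of `2` add up to `2n + 1/2`.
  have hscalar : 3 ^ ((N - 1) / 2) * (2 / 3 : ℝ) ^ ((n : ℝ) + (N - 1) / 2) * 24 ^ n *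
      (2 : ℝ) ^ (1 - 2 * ((n : ℝ) + N / 4)) = √2 * 4 ^ n := by
    refine log_injOn_pos (Set.mem_Ioi.mpr (by positivity)) (Set.mem_Ioi.mpr (by positivity)) ?_
    have h24 : log 24 = 3 * log 2 + log 3 := by
      rw [show (24 : ℝ) = 2 ^ 3 * 3 by norm_num, log_mul (by norm_num) (by norm_num), log_pow]
      push_cast
      ring
    have h4 : log 4 = 2 * log 2 := by
      rw [show (4 : ℝ) = 2 ^ 2 by norm_num, log_pow]
      push_cast
      ring
    rw [log_mul, log_mul, log_mul, log_mul, log_rpow, log_rpow, log_rpow, log_pow, log_pow,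
      log_sqrt, log_div, h24, h4]
    · ring
    all_goals positivity
  rw [hprod, hdup, Gamma_nat_eq_factorial, sqrt_mul zero_le_two]
  generalize (3 : ℝ) ^ ((N - 1) / 2) * (2 / 3 : ℝ) ^ ((n : ℝ) + (N - 1) / 2) = C at hscalar ⊢
  generalize (2 : ℝ) ^ (1 - 2 * ((n : ℝ) + N / 4)) = P at hscalar ⊢
  field_simp
  linear_combination -hscalar

/-- Fix a real `N > 0` and set
`z_n := (∏_{k=0}^{2n-1} (N+2k)) / (n! · 24^n)` (the coefficients of the vacuum
partition function of zero-dimensional O(N)-symmetric φ⁴ theory).  Then `z_n` is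
asymptotic to
`3^((N-1)/2) · (2/3)^(n+(N-1)/2) · Γ(n+(N-1)/2) / (√(2π) · Γ(N/2))`
as `n → ∞`, i.e. the ratio tends to `1`. -/
theorem partition_function_asymptotics (N : ℝ) (hN : 0 < N) :
    Filter.Tendsto
      (fun n : ℕ =>
        ((∏ k ∈ Finset.range (2 * n), (N + 2 * (k : ℝ))) /
            ((n.factorial : ℝ) * 24 ^ n)) /
          ((3 : ℝ) ^ ((N - 1) / 2) * (2 / 3 : ℝ) ^ ((n : ℝ) + (N - 1) / 2) *
              Real.Gamma ((n : ℝ) + (N - 1) / 2) /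
            (Real.sqrt (2 * Real.pi) * Real.Gamma (N / 2))))
      Filter.atTop (nhds 1) := by
  have hlim := tendsto_Gamma_nat_add_mul_div_of_add_eq
    (a := N / 4) (b := N / 4 + 1 / 2) (c := 1) (d := (N - 1) / 2) (by ring)
  refine hlim.congr fun n => ?_
  have hscale : 3 ^ ((N - 1) / 2) * (2 / 3 : ℝ) ^ ((n : ℝ) + (N - 1) / 2) /
      (√(2 * π) * Gamma (N / 2)) ≠ 0 := by
    have := Gamma_pos_of_pos (half_pos hN)
    positivity
  rw [prod_range_div_factorial_mul_eq_Gamma hN,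
    mul_div_right_comm (3 ^ ((N - 1) / 2) * (2 / 3 : ℝ) ^ ((n : ℝ) + (N - 1) / 2)),
    mul_div_mul_left _ _ hscale, div_div, add_assoc]
end
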